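/- Define, for real I ≥ 1, α*_1(I) = 1/I − (1/I)·((I+1)/(44I+22))·(9I² + 7I + 20 − √(81I⁴ + 126I³ + 409I² − 512I + 4)). Then the total first-round harvested share I·α*_1(I) = 1 − ((I+1)/(44I+22))·(9I² + 7I + 20 − √(81I⁴ + 126I³ + 409I² − 512I + 4)) tends to 1 as I → ∞. -/
import Mathlib


open Filter

/-- The discriminant `81I⁴ + 126I³ + 409I² − 512I + 4`. -/
noncomputable def gameDisc (I : ℝ) : ℝ :=
  81 * I ^ 4 + 126 * I ^ 3 + 409 * I ^ 2 - 512 * I + 4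

/-- The symmetric equilibrium first-round share with `I` players
(for `w₁ = 1`, `w₂ = 11/9`). -/
noncomputable def alpha1Eq (I : ℝ) : ℝ :=
  1 / I - 1 / I * ((I + 1) / (44 * I + 22)) *
    (9 * I ^ 2 + 7 * I + 20 - Real.sqrt (gameDisc I))

lemma gameDisc_nonneg {I : ℝ} (hI : 1 ≤ I) : 0 ≤ gameDisc I := by
  unfold gameDisc; nlinarith [sq_nonneg I, sq_nonneg (I - 1)]

lemma sqrt_disc_le {I : ℝ} (hI : 1 ≤ I) :
    Real.sqrt (gameDisc I) ≤ 9 * I ^ 2 + 7 * I + 20 := by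
  have h1 : gameDisc I ≤ (9 * I ^ 2 + 7 * I + 20) ^ 2 := by
    unfold gameDisc; nlinarith
  have h2 : (0:ℝ) ≤ 9 * I ^ 2 + 7 * I + 20 := by nlinarith
  calc Real.sqrt (gameDisc I) ≤ Real.sqrt ((9 * I ^ 2 + 7 * I + 20) ^ 2) :=
        Real.sqrt_le_sqrt h1
    _ = 9 * I ^ 2 + 7 * I + 20 := Real.sqrt_sq h2

lemma g_bounds {I : ℝ} (hI : 1 ≤ I) :
    0 ≤ (I + 1) / (44 * I + 22) *
        (9 * I ^ 2 + 7 * I + 20 - Real.sqrt (gameDisc I)) ∧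
    (I + 1) / (44 * I + 22) *
        (9 * I ^ 2 + 7 * I + 20 - Real.sqrt (gameDisc I)) ≤ 4 / I := by
  set s := Real.sqrt (gameDisc I) with hs
  have hs0 : 0 ≤ s := Real.sqrt_nonneg _
  have hs2 : s ^ 2 = gameDisc I := Real.sq_sqrt (gameDisc_nonneg hI)
  have hsA : s ≤ 9 * I ^ 2 + 7 * I + 20 := sqrt_disc_le hI
  have hden : (0:ℝ) < 44 * I + 22 := by linarith
  have hIpos : (0:ℝ) < I := by linarith
  constructor
  · apply mul_nonneg
    · positivity
    · linarith
  · rw [div_mul_eq_mul_div, div_le_div_iff₀ hden hIpos]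
    have hAs : s * s ≤ (9 * I ^ 2 + 7 * I + 20) * s :=
      mul_le_mul_of_nonneg_right hsA hs0
    unfold gameDisc at hs2
    nlinarith [sq_nonneg (s - I), mul_pos hIpos hIpos, sq_nonneg I]

/-- asymptotic depletion in round 1, Section 4.1.
For `I ≥ 1` the total first-round harvested share is
`I·α₁*(I) = 1 − ((I+1)/(44I+22))(9I² + 7I + 20 − √(gameDisc I))`,
and it tends to `1` as `I → ∞`. -/
theorem total_first_round_share_tendsto_one :
    (∀ I : ℝ, 1 ≤ I →
      I * alpha1Eq I =
        1 - (I + 1) / (44 * I + 22) *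
          (9 * I ^ 2 + 7 * I + 20 - Real.sqrt (gameDisc I))) ∧
      Tendsto (fun I : ℝ => I * alpha1Eq I) atTop (nhds 1) := by
  have hid : ∀ I : ℝ, 1 ≤ I →
      I * alpha1Eq I =
        1 - (I + 1) / (44 * I + 22) *
          (9 * I ^ 2 + 7 * I + 20 - Real.sqrt (gameDisc I)) := by
    intro I hI
    have hI0 : I ≠ 0 := by intro h; rw [h] at hI; linarith
    unfold alpha1Eq
    field_simp
  refine ⟨hid, ?_⟩
  have hg : Tendsto (fun I : ℝ => (I + 1) / (44 * I + 22) *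
      (9 * I ^ 2 + 7 * I + 20 - Real.sqrt (gameDisc I))) atTop (nhds 0) := by
    apply squeeze_zero' (t₀ := atTop)
    · filter_upwards [eventually_ge_atTop (1:ℝ)] with I hI
      exact (g_bounds hI).1
    · filter_upwards [eventually_ge_atTop (1:ℝ)] with I hI
      exact (g_bounds hI).2
    · exact Tendsto.div_atTop (tendsto_const_nhds (x := (4:ℝ))) tendsto_id
  have h1 : Tendsto (fun I : ℝ => 1 - (I + 1) / (44 * I + 22) *
      (9 * I ^ 2 + 7 * I + 20 - Real.sqrt (gameDisc I))) atTop (nhds 1) := by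
    have := (tendsto_const_nhds (x := (1:ℝ)) (f := atTop)).sub hg
    simpa using this
  apply h1.congr'
  filter_upwards [eventually_ge_atTop (1:ℝ)] with I hI
  exact (hid I hI).symm
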